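/- Let σ > 1 and n ≥ 1. For every ξ ∈ ℝⁿ with ‖ξ‖ ≥ 3^{1/σ} (so that r(ξ) = ‖ξ‖^(2σ) ≥ 9): the characteristic roots λ₁(ξ), λ₂(ξ) are real and satisfy −2 < λ₁(ξ) < −1, −‖ξ‖^(2σ) < λ₂(ξ) ≤ −‖ξ‖^(2σ)/2, and ‖ξ‖^(2σ)/2 ≤ λ₁(ξ) − λ₂(ξ) < ‖ξ‖^(2σ). -/
import Mathlib


noncomputable section

variable {n : ℕ}

/-- `r(ξ) = ‖ξ‖^(2σ)`. -/
def rr (σ : ℝ) (ξ : EuclideanSpace ℝ (Fin n)) : ℝ := ‖ξ‖ ^ (2 * σ)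

/-- First (real) characteristic root `λ₁(ξ) = (−r(ξ) + √(r(ξ)² − 4r(ξ)))/2`. -/
def lam1R (σ : ℝ) (ξ : EuclideanSpace ℝ (Fin n)) : ℝ :=
  (-(rr σ ξ) + Real.sqrt ((rr σ ξ) ^ 2 - 4 * rr σ ξ)) / 2

/-- Second (real) characteristic root `λ₂(ξ) = (−r(ξ) − √(r(ξ)² − 4r(ξ)))/2`. -/
def lam2R (σ : ℝ) (ξ : EuclideanSpace ℝ (Fin n)) : ℝ :=
  (-(rr σ ξ) - Real.sqrt ((rr σ ξ) ^ 2 - 4 * rr σ ξ)) / 2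

/-- for large frequencies `‖ξ‖ ≥ 3^{1/σ}` the real roots satisfy
`−2 < λ₁ < −1`, `−|ξ|^{2σ} < λ₂ ≤ −|ξ|^{2σ}/2` and `|ξ|^{2σ}/2 ≤ λ₁ − λ₂ < |ξ|^{2σ}`. -/
theorem stmt_16 (σ : ℝ) (hσ : 1 < σ) (n : ℕ) (hn : 1 ≤ n) :
    ∀ ξ : EuclideanSpace ℝ (Fin n), (3 : ℝ) ^ (1 / σ) ≤ ‖ξ‖ →
      (-2 < lam1R σ ξ ∧ lam1R σ ξ < -1) ∧
      (-(rr σ ξ) < lam2R σ ξ ∧ lam2R σ ξ ≤ -(rr σ ξ) / 2) ∧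
      (rr σ ξ / 2 ≤ lam1R σ ξ - lam2R σ ξ ∧ lam1R σ ξ - lam2R σ ξ < rr σ ξ) := by
  intro ξ hξ
  have hσ0 : (0:ℝ) < σ := by linarith
  have h3 : (0:ℝ) < (3:ℝ) ^ (1 / σ) := Real.rpow_pos_of_pos (by norm_num) _
  have hξ0 : 0 < ‖ξ‖ := lt_of_lt_of_le h3 hξ
  have hr9 : (9:ℝ) ≤ rr σ ξ := by
    have h1 : ((3:ℝ) ^ (1 / σ)) ^ (2 * σ) ≤ ‖ξ‖ ^ (2 * σ) :=
      Real.rpow_le_rpow (le_of_lt h3) hξ (by positivity)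
    have h2 : ((3:ℝ) ^ (1 / σ)) ^ (2 * σ) = (9:ℝ) := by
      rw [← Real.rpow_mul (by norm_num : (0:ℝ) ≤ 3)]
      have : 1 / σ * (2 * σ) = 2 := by field_simp
      rw [this]
      norm_num
    rw [h2] at h1
    exact h1
  set r := rr σ ξ with hrdef
  set s := Real.sqrt (r ^ 2 - 4 * r) with hsdef
  have hs0 : 0 ≤ s := Real.sqrt_nonneg _
  have hs2 : s ^ 2 = r ^ 2 - 4 * r := Real.sq_sqrt (by nlinarith)
  have h1 : s < r - 2 := by nlinarith
  have h2 : r - 4 < s := by nlinarith [sq_nonneg (s - (r - 4))]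
  have h3' : r / 2 ≤ s := by nlinarith [sq_nonneg (s - r / 2)]
  have h4 : s < r := by nlinarith
  refine ⟨⟨?_, ?_⟩, ⟨?_, ?_⟩, ?_, ?_⟩ <;>
    simp only [lam1R, lam2R, ← hrdef, ← hsdef] <;> linarith
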